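/- Let (C, J, P) be a geometric context, let f : S' → S be a schematic morphism of sheaves over (C, J), and let p : X → S be a morphism of sheaves where X is an elementary scheme. Then the pullback X' = S' ×_S X is an elementary scheme. -/

import Mathlib

open CategoryTheory CategoryTheory.Limits

universe u

namespace GeomCtx

variable {C : Type u} [SmallCategory C]

/-- An arrow `f` of a category is *cartesian* if pullbacks of arbitrary morphisms
along `f` exist. -/
def CartesianArrow {X Y : C} (f : X ⟶ Y) : Prop :=
  ∀ ⦃Z : C⦄ (g : Z ⟶ Y), HasPullback f g

/-- A family of arrows `(ρ i : Ui i ⟶ X)` is a `J`-covering if the sieve it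
generates is a `J`-covering sieve. -/
def IsJCover (J : GrothendieckTopology C) {X : C} {I : Type u} (Ui : I → C)
    (ρ : ∀ i, Ui i ⟶ X) : Prop :=
  Sieve.generate (Presieve.ofArrows Ui ρ) ∈ J X

/-- A Grothendieck pretopology (in the sense that does not presuppose the existence of
all pullbacks in `C`): a collection of covering families consisting of cartesian arrows,
stable under pullback, transitive, and containing the isomorphisms. -/
structure IsPretopology (Cov : ∀ U : C, Set (Presieve U)) : Prop where
  cartesian : ∀ ⦃U : C⦄, ∀ R ∈ Cov U, ∀ ⦃V : C⦄ (f : V ⟶ U), R f → CartesianArrow f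
  pullback_stable : ∀ ⦃U V : C⦄ (g : V ⟶ U), ∀ R ∈ Cov U,
    ∃ S ∈ Cov V, ∀ ⦃W : C⦄ (f : W ⟶ V), S f →
      ∃ (Z : C) (r : Z ⟶ U) (h : W ⟶ Z), R r ∧ IsPullback h f r g
  trans : ∀ ⦃U : C⦄ (R : Presieve U), R ∈ Cov U →
    ∀ (T : ∀ ⦃V : C⦄ ⦃f : V ⟶ U⦄, R f → Presieve V),
      (∀ ⦃V : C⦄ ⦃f : V ⟶ U⦄ (hf : R f), T hf ∈ Cov V) →
      R.bind T ∈ Cov U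
  has_isos : ∀ ⦃U V : C⦄ (f : V ⟶ U) [IsIso f], Presieve.singleton f ∈ Cov U

/-- A Grothendieck topology is generated by a pretopology if its covering sieves are
exactly the sieves containing a sieve generated by a covering family of the pretopology. -/
def GeneratedByPretopology (J : GrothendieckTopology C) : Prop :=
  ∃ Cov : ∀ U : C, Set (Presieve U), IsPretopology Cov ∧
    ∀ (U : C) (S : Sieve U), S ∈ J U ↔ ∃ R ∈ Cov U, Sieve.generate R ≤ S

/-- A *geometric context* `(C, J, P)`: a small category `C` with finite products, a
subcanonical Grothendieck topology `J` generated by a pretopology, and an admissible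
class `P` of arrows of `C` which is `J`-local and locally cartesian, and such that `J`
is `P`-generated. -/
structure IsGeometricContext (J : GrothendieckTopology C) (P : MorphismProperty C) : Prop where
  /-- (GC1) `C` admits finite products. -/
  hasFiniteProducts : HasFiniteProducts C
  /-- (GC2a) `J` is subcanonical: every representable presheaf is a `J`-sheaf. -/
  subcanonical : ∀ U : C, Presheaf.IsSheaf J (yoneda.obj U)
  /-- (GC2b) `J` is generated by a Grothendieck pretopology. -/
  pretopologyGenerated : GeneratedByPretopology J
  /-- (GC3a) `P` contains all identities. -/
  id_mem : ∀ U : C, P (𝟙 U)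
  /-- (GC3b) `P` is stable under base change. -/
  stableUnderBaseChange : ∀ ⦃U' V' U V : C⦄ (f' : U' ⟶ V') (g' : U' ⟶ U)
    (g : V' ⟶ V) (f : U ⟶ V), IsPullback f' g' g f → P f → P f'
  /-- (GC3c) `P` is stable under composition. -/
  stableUnderComposition : ∀ ⦃U V W : C⦄ (f : U ⟶ V) (g : V ⟶ W), P f → P g → P (f ≫ g)
  /-- (GC4) `P` is `J`-local. -/
  jLocal : ∀ ⦃U V : C⦄ (φ : U ⟶ V) ⦃I : Type u⦄ (Ui : I → C) (ρ : ∀ i, Ui i ⟶ U),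
    IsJCover J Ui ρ → (∀ i, P (ρ i)) → (∀ i, P (ρ i ≫ φ)) → P φ
  /-- (GC5) `J` is `P`-generated: every `J`-covering admits a `P`-refinement. -/
  pGenerated : ∀ ⦃U : C⦄ ⦃A : Type u⦄ (Ua : A → C) (ρ : ∀ a, Ua a ⟶ U),
    IsJCover J Ua ρ → ∃ (I : Type u) (Vi : I → C) (φ : ∀ i, Vi i ⟶ U),
      (∀ i, P (φ i)) ∧ ∀ a, ∃ (i : I) (g : Ua a ⟶ Vi i), g ≫ φ i = ρ a
  /-- (GC6) `P` is locally cartesian. -/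
  locallyCartesian : ∀ ⦃U V : C⦄ (φ : U ⟶ V), P φ →
    ∃ (I : Type u) (Ui : I → C) (ρ : ∀ i, Ui i ⟶ U),
      IsJCover J Ui ρ ∧ (∀ i, P (ρ i)) ∧ ∀ i, CartesianArrow (ρ i ≫ φ)

variable (J : GrothendieckTopology C)

/-- `Subcanonicity` of `J`, phrased concretely. -/
abbrev Subcanonical : Prop := ∀ U : C, Presheaf.IsSheaf J (yoneda.obj U)

/-- The sheaf represented by an object `U` of `C` (for a subcanonical topology). -/
def yo (hs : Subcanonical J) (U : C) : Sheaf J (Type u) :=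
  ⟨yoneda.obj U, hs U⟩

/-- The morphism of representable sheaves induced by a morphism of `C`. -/
def yoMap (hs : Subcanonical J) {U V : C} (f : U ⟶ V) : yo J hs U ⟶ yo J hs V :=
  ⟨yoneda.map f⟩

/-- Two morphisms `f : A ⟶ X` and `g : B ⟶ X` of sheaves have the same image, as a
subobject of `X`: there is a common monomorphism into `X` through which both factor
epimorphically. -/
def SameImage {A B X : Sheaf J (Type u)} (f : A ⟶ X) (g : B ⟶ X) : Prop :=
  ∃ (W : Sheaf J (Type u)) (i : W ⟶ X) (p : A ⟶ W) (q : B ⟶ W),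
    Mono i ∧ Epi p ∧ Epi q ∧ p ≫ i = f ∧ q ≫ i = g

variable (P : MorphismProperty C)

instance instHasColimitsOfShapeDiscreteSheafType {I : Type u} :
    HasColimitsOfShape (Discrete I) (Sheaf J (Type u)) :=
  @Sheaf.instHasColimitsOfShape _ _ _ _ _ _ _ inferInstance inferInstance

/-- A morphism of sheaves `f : F ⟶ H` is an *open immersion* if for every `U : C` and
every morphism `g : h_U ⟶ H`, the projection `F ×_H h_U ⟶ h_U` is a monomorphism and
there is a family of `P`-morphisms `(Ui i ⟶ U)` such that the image of the induced
morphism `∐ h_{Ui i} ⟶ h_U` coincides, as a subobject of `h_U`, with the image of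
`F ×_H h_U ⟶ h_U`. -/
def IsOpenImmersion (hs : Subcanonical J) {F H : Sheaf J (Type u)} (f : F ⟶ H) : Prop :=
  ∀ (U : C) (g : yo J hs U ⟶ H),
    Mono (pullback.snd f g) ∧
    ∃ (I : Type u) (Ui : I → C) (ρ : ∀ i, Ui i ⟶ U),
      (∀ i, P (ρ i)) ∧
      SameImage J (Limits.Sigma.desc fun i => yoMap J hs (ρ i)) (pullback.snd f g)

/-- An *open atlas* of a sheaf `X`: a family of open immersions from representable
sheaves which is jointly epimorphic. A sheaf admitting an open atlas is an
*elementary scheme*. -/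
def IsElementaryScheme (hs : Subcanonical J) (X : Sheaf J (Type u)) : Prop :=
  ∃ (I : Type u) (Ui : I → C) (p : ∀ i, yo J hs (Ui i) ⟶ X),
    (∀ i, IsOpenImmersion J P hs (p i)) ∧ Epi (Limits.Sigma.desc p)

/-- A morphism of sheaves `f : F ⟶ H` is an *`S`-morphism* if for every `U : C` and
every `g : h_U ⟶ H` there is an open atlas `∐ h_{Ui i} ⟶ F ×_H h_U` such that each
induced composite `Ui i ⟶ U` (viewed in `C` via the Yoneda embedding) lies in `S`. -/
def IsSMorphism (hs : Subcanonical J) (S : MorphismProperty C)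
    {F H : Sheaf J (Type u)} (f : F ⟶ H) : Prop :=
  ∀ (U : C) (g : yo J hs U ⟶ H),
    ∃ (I : Type u) (Ui : I → C) (p : ∀ i, yo J hs (Ui i) ⟶ pullback f g),
      (∀ i, IsOpenImmersion J P hs (p i)) ∧ Epi (Limits.Sigma.desc p) ∧
      ∀ i, ∃ ρ : Ui i ⟶ U, yoMap J hs ρ = p i ≫ pullback.snd f g ∧ S ρ

/-- A morphism of sheaves `f : F ⟶ H` is *schematic* if for every `U : C` and every
`g : h_U ⟶ H` the pullback `F ×_H h_U` is an elementary scheme. -/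
def IsSchematic (hs : Subcanonical J) {F H : Sheaf J (Type u)} (f : F ⟶ H) : Prop :=
  ∀ (U : C) (g : yo J hs U ⟶ H), IsElementaryScheme J P hs (pullback f g)

section Aux

open Opposite

variable {J}
variable (hs : Subcanonical J)

lemma yoMap_comp {U V W : C} (f : U ⟶ V) (g : V ⟶ W) :
    yoMap J hs (f ≫ g) = yoMap J hs f ≫ yoMap J hs g :=
  Sheaf.hom_ext (by simp [yoMap]; rfl)

/-- The section of a sheaf corresponding to a morphism from a representable sheaf. -/
def toSec {F : Sheaf J (Type u)} {U : C} (x : yo J hs U ⟶ F) : F.val.obj (op U) :=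
  yonedaEquiv x.hom

/-- The morphism from a representable sheaf corresponding to a section. -/
def ofSec {F : Sheaf J (Type u)} {U : C} (s : F.val.obj (op U)) : yo J hs U ⟶ F :=
  ⟨yonedaEquiv.symm s⟩

lemma toSec_ofSec {F : Sheaf J (Type u)} {U : C} (s : F.val.obj (op U)) :
    toSec hs (ofSec hs s) = s :=
  yonedaEquiv.apply_symm_apply s

lemma toSec_injective {F : Sheaf J (Type u)} {U : C} {x y : yo J hs U ⟶ F}
    (h : toSec hs x = toSec hs y) : x = y :=
  Sheaf.hom_ext (yonedaEquiv.injective h)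

lemma comp_toSec {F G : Sheaf J (Type u)} {U : C} (x : yo J hs U ⟶ F) (f : F ⟶ G) :
    toSec hs (x ≫ f) = f.hom.app (op U) (toSec hs x) :=
  yonedaEquiv_comp x.hom f.hom

lemma yoMap_toSec {F : Sheaf J (Type u)} {U V : C} (φ : V ⟶ U) (x : yo J hs U ⟶ F) :
    toSec hs (yoMap J hs φ ≫ x) = F.val.map φ.op (toSec hs x) :=
  (yonedaEquiv_naturality x.hom φ).symm

lemma hom_ext_yo {F G : Sheaf J (Type u)} {a b : F ⟶ G}
    (h : ∀ (U : C) (x : yo J hs U ⟶ F), x ≫ a = x ≫ b) : a = b := by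
  apply Sheaf.hom_ext
  apply NatTrans.ext
  funext V
  ext s
  induction V using Opposite.rec with
  | op V =>
    have := congrArg (toSec hs) (h V (ofSec hs s))
    rw [comp_toSec, comp_toSec, toSec_ofSec] at this
    exact this

lemma mono_iff_yo {F G : Sheaf J (Type u)} (f : F ⟶ G) :
    Mono f ↔ ∀ (U : C) (a b : yo J hs U ⟶ F), a ≫ f = b ≫ f → a = b := by
  constructor
  · intro h U a b hab
    exact (cancel_mono f).1 hab
  · intro h
    constructor
    intro Z a b hab
    apply hom_ext_yo hs
    intro U x
    exact h U (x ≫ a) (x ≫ b) (by simp only [Category.assoc, hab])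

/-- A family of morphisms of sheaves is locally (jointly) surjective on points from
representables. -/
def LocallyFactors {I : Type u} {A : I → Sheaf J (Type u)} {B : Sheaf J (Type u)}
    (c : ∀ i, A i ⟶ B) : Prop :=
  ∀ (U : C) (x : yo J hs U ⟶ B), ∃ S ∈ J U, ∀ ⦃V : C⦄ (φ : V ⟶ U), S.arrows φ →
    ∃ (i : I) (l : yo J hs V ⟶ A i), l ≫ c i = yoMap J hs φ ≫ x

variable {hs}

lemma exists_bind {U : C} {Q : ∀ ⦃V : C⦄, (V ⟶ U) → Prop}
    (S : Sieve U) (hS : S ∈ J U)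
    (H : ∀ ⦃V : C⦄ (φ : V ⟶ U), S.arrows φ → ∃ T ∈ J V,
      ∀ ⦃W : C⦄ (ψ : W ⟶ V), (T : Sieve V).arrows ψ → Q (ψ ≫ φ)) :
    ∃ S' ∈ J U, ∀ ⦃V : C⦄ (φ : V ⟶ U), (S' : Sieve U).arrows φ → Q φ := by
  choose T hT hQ using H
  refine ⟨Sieve.bind S.arrows (fun V φ hφ => T φ hφ), J.bind_covering hS hT, ?_⟩
  intro V φ hφ
  obtain ⟨W, ψ, ξ, hξ, hψ, rfl⟩ := hφ
  exact hQ _ hξ _ hψ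

section SigmaPre

variable {I : Type u} (A : I → Sheaf J (Type u))

/-- The objectwise coproduct of the underlying presheaves of a family of sheaves. -/
@[simps]
def sigmaPre : Cᵒᵖ ⥤ Type u where
  obj V := Σ i, (A i).val.obj V
  map φ := TypeCat.ofHom fun x => ⟨x.1, (A x.1).val.map φ x.2⟩
  map_id V := by ext ⟨i, x⟩; exacts [rfl, heq_of_eq (show (A i).val.map (𝟙 V) x = x by simp)]
  map_comp φ ψ := by ext ⟨i, x⟩; exacts [rfl, heq_of_eq (show (A i).val.map (φ ≫ ψ) x = (A i).val.map ψ ((A i).val.map φ x) by simp)]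

/-- The canonical comparison from the objectwise coproduct to the coproduct sheaf. -/
@[simps]
noncomputable def sigmaPreDesc : sigmaPre A ⟶ (∐ A).val where
  app V := TypeCat.ofHom fun x => (Limits.Sigma.ι A x.1).hom.app V x.2
  naturality V V' φ := by
    ext x
    cases x with
    | mk i x => exact ((Limits.Sigma.ι A i).hom.naturality_apply φ x)

/-- The inclusion of a component into the objectwise coproduct. -/
@[simps]
def sigmaPreι (i : I) : (A i).val ⟶ sigmaPre A where
  app V := TypeCat.ofHom fun x => ⟨i, x⟩
  naturality V V' φ := rfl

lemma isLocallySurjective_sigmaPreDesc :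
    Presheaf.IsLocallySurjective J (sigmaPreDesc A) := by
  let c : (presheafToSheaf J (Type u)).obj (sigmaPre A) ⟶ ∐ A :=
    ⟨sheafifyLift J (sigmaPreDesc A) (∐ A).cond⟩
  have hfac : ∀ i, (⟨sigmaPreι A i ≫ toSheafify J (sigmaPre A)⟩ :
        A i ⟶ (presheafToSheaf J (Type u)).obj (sigmaPre A)) ≫ c = Limits.Sigma.ι A i := by
    intro i
    apply Sheaf.hom_ext
    change (sigmaPreι A i ≫ toSheafify J (sigmaPre A)) ≫
      sheafifyLift J (sigmaPreDesc A) (∐ A).cond = _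
    rw [Category.assoc, toSheafify_sheafifyLift]
    rfl
  have hepi : Epi c := by
    constructor
    intro T a b h
    refine Limits.Sigma.hom_ext _ _ (fun i => ?_)
    rw [← hfac i, Category.assoc, Category.assoc, h]
  haveI : Sheaf.IsLocallySurjective c := (Sheaf.isLocallySurjective_iff_epi c).2 hepi
  have h2 : Presheaf.IsLocallySurjective J (toSheafify J (sigmaPre A) ≫ c.hom) :=
    inferInstance
  have : toSheafify J (sigmaPre A) ≫ c.hom = sigmaPreDesc A :=
    toSheafify_sheafifyLift J (sigmaPreDesc A) (∐ A).cond
  rwa [this] at h2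

lemma exists_sigma_factorization {U : C} (l : yo J hs U ⟶ ∐ A) :
    ∃ S ∈ J U, ∀ ⦃V : C⦄ (φ : V ⟶ U), (S : Sieve U).arrows φ →
      ∃ (i : I) (m : yo J hs V ⟶ A i), m ≫ Limits.Sigma.ι A i = yoMap J hs φ ≫ l := by
  have hls := isLocallySurjective_sigmaPreDesc A
  refine ⟨Presheaf.imageSieve (sigmaPreDesc A) (toSec hs l),
    Presheaf.imageSieve_mem J (sigmaPreDesc A) (toSec hs l), ?_⟩
  intro V φ hφ
  obtain ⟨⟨i, x⟩, ht⟩ := hφ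
  refine ⟨i, ofSec hs x, ?_⟩
  apply toSec_injective
  rw [comp_toSec, yoMap_toSec]
  rw [show toSec hs (ofSec hs x : yo J hs V ⟶ A i) = x from toSec_ofSec hs x]
  exact ht

end SigmaPre

lemma epi_sigmaDesc_iff {I : Type u} {A : I → Sheaf J (Type u)} {B : Sheaf J (Type u)}
    (c : ∀ i, A i ⟶ B) : Epi (Limits.Sigma.desc c) ↔ LocallyFactors hs c := by
  constructor
  · intro h U x
    have hls : Sheaf.IsLocallySurjective (Limits.Sigma.desc c) :=
      (Sheaf.isLocallySurjective_iff_epi _).2 h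
    refine exists_bind (Presheaf.imageSieve (Limits.Sigma.desc c).hom (toSec hs x))
      (Presheaf.imageSieve_mem J (Limits.Sigma.desc c).hom (toSec hs x)) ?_
    intro V φ hφ
    obtain ⟨t, ht⟩ := hφ
    have hl' : (ofSec hs t : yo J hs V ⟶ ∐ A) ≫ Limits.Sigma.desc c = yoMap J hs φ ≫ x := by
      apply toSec_injective
      rw [comp_toSec, yoMap_toSec, toSec_ofSec]
      exact ht
    obtain ⟨S₂, hS₂, H₂⟩ := exists_sigma_factorization A (ofSec hs t)
    refine ⟨S₂, hS₂, ?_⟩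
    intro W ψ hψ
    obtain ⟨i, m, hm⟩ := H₂ ψ hψ
    refine ⟨i, m, ?_⟩
    have hkey : m ≫ Limits.Sigma.ι A i ≫ Limits.Sigma.desc c = yoMap J hs (ψ ≫ φ) ≫ x := by
      rw [← Category.assoc, hm, Category.assoc, hl', yoMap_comp hs, Category.assoc]
    simpa using hkey
  · intro H
    haveI : Sheaf.IsLocallySurjective (Limits.Sigma.desc c) := by
      constructor
      intro U s
      obtain ⟨S, hS, hfac⟩ := H U (ofSec hs s)
      refine J.superset_covering ?_ hS
      intro V φ hφ
      obtain ⟨i, l, hl⟩ := hfac φ hφ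
      refine ⟨toSec hs (l ≫ Limits.Sigma.ι A i), ?_⟩
      refine ((comp_toSec hs (l ≫ Limits.Sigma.ι A i) (Limits.Sigma.desc c)).symm).trans ?_
      rw [Category.assoc, Limits.Sigma.ι_desc, hl, yoMap_toSec, toSec_ofSec]
    exact Sheaf.epi_of_isLocallySurjective _

lemma locallyFactors_comp {B : Sheaf J (Type u)} {I₁ : Type u} {M : I₁ → Sheaf J (Type u)}
    {c : ∀ i, M i ⟶ B} {K : I₁ → Type u} {N : ∀ i, K i → Sheaf J (Type u)}
    {d : ∀ i k, N i k ⟶ M i}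
    (hc : LocallyFactors hs c) (hd : ∀ i, LocallyFactors hs (d i)) :
    LocallyFactors hs (fun ik : Σ i, K i => d ik.1 ik.2 ≫ c ik.1) := by
  intro U x
  obtain ⟨S, hS, H⟩ := hc U x
  refine exists_bind S hS ?_
  intro V φ hφ
  obtain ⟨i, l, hl⟩ := H φ hφ
  obtain ⟨T, hT, HT⟩ := hd i V l
  refine ⟨T, hT, ?_⟩
  intro W ψ hψ
  obtain ⟨k, m, hm⟩ := HT ψ hψ
  refine ⟨⟨i, k⟩, m, ?_⟩
  dsimp only
  rw [← Category.assoc, hm, Category.assoc, hl, ← Category.assoc, ← yoMap_comp hs]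

lemma SameImage.factor {A B X : Sheaf J (Type u)} {f : A ⟶ X} {g : B ⟶ X}
    (h : SameImage J f g) (hg : Mono g) : ∃ t : A ⟶ B, t ≫ g = f ∧ Epi t := by
  obtain ⟨W, i, pp, qq, hi, hp, hq, hpf, hqg⟩ := h
  haveI := hi; haveI := hp; haveI := hq
  haveI : Mono qq := by
    have : Mono (qq ≫ i) := hqg ▸ hg
    exact mono_of_mono qq i
  haveI : IsIso qq := isIso_of_mono_of_epi qq
  refine ⟨pp ≫ inv qq, ?_, epi_comp _ _⟩
  rw [← hqg, ← hpf]
  simp only [Category.assoc, IsIso.inv_hom_id_assoc]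


lemma isOpenImmersion_of_isPullback {F G T Q : Sheaf J (Type u)} {u : F ⟶ G}
    (hu : IsOpenImmersion J P hs u) {t : T ⟶ G} {a : Q ⟶ F} {b : Q ⟶ T}
    (hpb : IsPullback a b u t) : IsOpenImmersion J P hs b := by
  intro U g
  have h1 : IsPullback (pullback.fst b g ≫ a) (pullback.snd b g) u (g ≫ t) :=
    (IsPullback.of_hasPullback b g).paste_horiz hpb
  obtain ⟨hmono, I, Ui, ρ, hρ, hsame⟩ := hu U (g ≫ t)
  have he : h1.isoPullback.hom ≫ pullback.snd u (g ≫ t) = pullback.snd b g :=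
    h1.isoPullback_hom_snd
  constructor
  · haveI := hmono
    rw [← he]
    exact mono_comp _ _
  · obtain ⟨W, ii, pp, qq, h₁, h₂, h₃, h₄, h₅⟩ := hsame
    refine ⟨I, Ui, ρ, hρ, W, ii, pp, h1.isoPullback.hom ≫ qq, h₁, h₂, ?_, h₄, ?_⟩
    · haveI := h₃; exact epi_comp _ _
    · rw [Category.assoc, h₅, he]

lemma isOpenImmersion_comp {F G H : Sheaf J (Type u)} {u : F ⟶ G} {v : G ⟶ H}
    (hP : ∀ ⦃U V W : C⦄ (f : U ⟶ V) (g : V ⟶ W), P f → P g → P (f ≫ g))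
    (hu : IsOpenImmersion J P hs u) (hv : IsOpenImmersion J P hs v) :
    IsOpenImmersion J P hs (u ≫ v) := by
  intro U g
  obtain ⟨hm2, I₀, Ui, ρ, hρP, hsame2⟩ := hv U g
  obtain ⟨t2, ht2, hept2⟩ := SameImage.factor hsame2 hm2
  set σ : ∀ i, yo J hs (Ui i) ⟶ pullback v g := fun i =>
    Limits.Sigma.ι (fun j => yo J hs (Ui j)) i ≫ t2 with hσ
  have hσm : ∀ i, σ i ≫ pullback.snd v g = yoMap J hs (ρ i) := by
    intro i; rw [hσ]; dsimp only; rw [Category.assoc, ht2, Limits.Sigma.ι_desc]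
  have hσLF : LocallyFactors hs σ := by
    rw [← epi_sigmaDesc_iff]
    have hd : Limits.Sigma.desc σ = t2 := Limits.Sigma.hom_ext _ _ (fun i => by rw [Limits.Sigma.ι_desc])
    rw [hd]; exact hept2
  set gi : ∀ i, yo J hs (Ui i) ⟶ G := fun i => σ i ≫ pullback.fst v g with hgi
  have hm1 : ∀ i, Mono (pullback.snd u (gi i)) := fun i => (hu (Ui i) (gi i)).1
  choose K Vik τ hfam using fun i => (hu (Ui i) (gi i)).2
  have hτP : ∀ i k, P (τ i k) := fun i k => (hfam i).1 k
  choose t1 ht1 hept1 using fun i => SameImage.factor (hfam i).2 (hm1 i)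
  set θ : ∀ i k, yo J hs (Vik i k) ⟶ pullback u (gi i) := fun i k =>
    Limits.Sigma.ι (fun j => yo J hs (Vik i j)) k ≫ t1 i with hθ
  have hθm : ∀ i k, θ i k ≫ pullback.snd u (gi i) = yoMap J hs (τ i k) := by
    intro i k; rw [hθ]; dsimp only; rw [Category.assoc, ht1, Limits.Sigma.ι_desc]
  have hθLF : ∀ i, LocallyFactors hs (θ i) := by
    intro i
    rw [← epi_sigmaDesc_iff]
    have hd : Limits.Sigma.desc (θ i) = t1 i := Limits.Sigma.hom_ext _ _ (fun k => by rw [Limits.Sigma.ι_desc])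
    rw [hd]; exact hept1 i
  have hμcond : ∀ i, pullback.fst u (gi i) ≫ u =
      (pullback.snd u (gi i) ≫ σ i) ≫ pullback.fst v g := by
    intro i
    rw [pullback.condition]
    simp only [Category.assoc]
    rfl
  set μ : ∀ i, pullback u (gi i) ⟶ pullback u (pullback.fst v g) := fun i =>
    pullback.lift (pullback.fst u (gi i)) (pullback.snd u (gi i) ≫ σ i) (hμcond i) with hμ
  have hμfst : ∀ i, μ i ≫ pullback.fst u (pullback.fst v g) = pullback.fst u (gi i) :=
    fun i => pullback.lift_fst _ _ _
  have hμsnd : ∀ i, μ i ≫ pullback.snd u (pullback.fst v g) = pullback.snd u (gi i) ≫ σ i :=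
    fun i => pullback.lift_snd _ _ _
  have hbig : IsPullback (pullback.fst u (pullback.fst v g))
      (pullback.snd u (pullback.fst v g) ≫ pullback.snd v g) (u ≫ v) g :=
    (IsPullback.of_hasPullback u (pullback.fst v g)).paste_vert (IsPullback.of_hasPullback v g)
  have hesnd : hbig.isoPullback.hom ≫ pullback.snd (u ≫ v) g =
      pullback.snd u (pullback.fst v g) ≫ pullback.snd v g := hbig.isoPullback_hom_snd
  haveI hrsnd : Mono (pullback.snd u (pullback.fst v g)) := by
    rw [mono_iff_yo hs]
    intro V a b hab
    set γ := (a ≫ pullback.snd u (pullback.fst v g)) ≫ pullback.fst v g with hγ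
    have hmono1 := (hu V γ).1
    have ha' : (a ≫ pullback.fst u (pullback.fst v g)) ≫ u = 𝟙 _ ≫ γ := by
      rw [Category.id_comp, hγ, Category.assoc, Category.assoc, pullback.condition]
    have hb' : (b ≫ pullback.fst u (pullback.fst v g)) ≫ u = 𝟙 _ ≫ γ := by
      rw [Category.id_comp, hγ, hab, Category.assoc, Category.assoc, pullback.condition]
    have heq : pullback.lift _ _ ha' = pullback.lift _ _ hb' := by
      haveI := hmono1
      rw [← cancel_mono (pullback.snd u γ), pullback.lift_snd, pullback.lift_snd]
    have hfst : a ≫ pullback.fst u (pullback.fst v g) =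
        b ≫ pullback.fst u (pullback.fst v g) := by
      have h1 := congrArg (fun z => z ≫ pullback.fst u γ) heq
      simpa only [pullback.lift_fst] using h1
    exact pullback.hom_ext hfst hab
  haveI := hm2
  haveI hmono12 : Mono (pullback.snd u (pullback.fst v g) ≫ pullback.snd v g) :=
    mono_comp _ _
  constructor
  · have hrw : hbig.isoPullback.inv ≫
        (pullback.snd u (pullback.fst v g) ≫ pullback.snd v g) = pullback.snd (u ≫ v) g := by
      rw [Iso.inv_comp_eq]
      exact hesnd.symm
    rw [← hrw]
    exact mono_comp _ _
  · have hμLF : LocallyFactors hs μ := by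
      intro U' x
      obtain ⟨S₁, hS₁, H₁⟩ := hσLF U' (x ≫ pullback.snd u (pullback.fst v g))
      refine ⟨S₁, hS₁, ?_⟩
      intro V' φ hφ
      obtain ⟨i, l, hl⟩ := H₁ φ hφ
      have hcond : ((yoMap J hs φ ≫ x) ≫ pullback.fst u (pullback.fst v g)) ≫ u
          = l ≫ gi i := by
        rw [hgi]
        simp only [Category.assoc]
        rw [pullback.condition, ← Category.assoc l, hl]
        simp only [Category.assoc]
      refine ⟨i, pullback.lift ((yoMap J hs φ ≫ x) ≫ pullback.fst u (pullback.fst v g))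
        l hcond, ?_⟩
      apply pullback.hom_ext
      · rw [Category.assoc, hμfst i, pullback.lift_fst]
      · rw [Category.assoc, hμsnd i, ← Category.assoc, pullback.lift_snd, hl]
        simp only [Category.assoc]
    refine ⟨Σ i, K i, fun ik => Vik ik.1 ik.2, fun ik => τ ik.1 ik.2 ≫ ρ ik.1,
      fun ik => hP _ _ (hτP ik.1 ik.2) (hρP ik.1), ?_⟩
    refine ⟨pullback u (pullback.fst v g),
      pullback.snd u (pullback.fst v g) ≫ pullback.snd v g,
      Limits.Sigma.desc (fun ik : Σ i, K i => θ ik.1 ik.2 ≫ μ ik.1), hbig.isoPullback.inv,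
      hmono12, ?_, inferInstance, ?_, ?_⟩
    · exact (epi_sigmaDesc_iff _).2 (locallyFactors_comp hμLF hθLF)
    · refine Limits.Sigma.hom_ext _ _ (fun ik => ?_)
      rw [← Category.assoc, Limits.Sigma.ι_desc, Limits.Sigma.ι_desc, yoMap_comp hs]
      simp only [Category.assoc]
      rw [reassoc_of% (hμsnd ik.1), reassoc_of% (hθm ik.1 ik.2), hσm ik.1]
    · rw [Iso.inv_comp_eq]
      exact hesnd.symm

end Aux

end GeomCtx

open GeomCtx in
/-- If `f : S' ⟶ S` is a schematic morphism of sheaves and `p : X ⟶ S` with `X` an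
elementary scheme, then the pullback `X' = S' ×_S X` is an elementary scheme. -/
theorem statement13 {C : Type u} [SmallCategory C] (J : GrothendieckTopology C)
    (P : MorphismProperty C) (hGC : IsGeometricContext J P)
    {S' S X : Sheaf J (Type u)} (f : S' ⟶ S) (p : X ⟶ S)
    (hf : IsSchematic J P hGC.subcanonical f)
    (hX : IsElementaryScheme J P hGC.subcanonical X) :
    IsElementaryScheme J P hGC.subcanonical (pullback f p) := by
  classical
  obtain ⟨I₀, Ui, pi, hpiOpen, hpiEpi⟩ := hX
  choose K Vik q hqOpen hqEpi using fun i => hf (Ui i) (pi i ≫ p)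
  have hνcond : ∀ i, pullback.fst f (pi i ≫ p) ≫ f =
      (pullback.snd f (pi i ≫ p) ≫ pi i) ≫ p := by
    intro i
    rw [pullback.condition, Category.assoc]
  set ν : ∀ i, pullback f (pi i ≫ p) ⟶ pullback f p := fun i =>
    pullback.lift (pullback.fst f (pi i ≫ p)) (pullback.snd f (pi i ≫ p) ≫ pi i)
      (hνcond i) with hν
  have hνfst : ∀ i, ν i ≫ pullback.fst f p = pullback.fst f (pi i ≫ p) :=
    fun i => pullback.lift_fst _ _ _
  have hνsnd : ∀ i, ν i ≫ pullback.snd f p = pullback.snd f (pi i ≫ p) ≫ pi i :=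
    fun i => pullback.lift_snd _ _ _
  have hνPB : ∀ i, IsPullback (pullback.snd f (pi i ≫ p)) (ν i) (pi i) (pullback.snd f p) := by
    intro i
    have hbig : IsPullback (pullback.snd f (pi i ≫ p)) (ν i ≫ pullback.fst f p)
        (pi i ≫ p) f := by
      rw [hνfst i]
      exact (IsPullback.of_hasPullback f (pi i ≫ p)).flip
    exact hbig.of_bot (hνsnd i).symm (IsPullback.of_hasPullback f p).flip
  have hνOpen : ∀ i, IsOpenImmersion J P hGC.subcanonical (ν i) :=
    fun i => isOpenImmersion_of_isPullback P (hpiOpen i) (hνPB i)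
  have hpiLF : LocallyFactors hGC.subcanonical pi :=
    (epi_sigmaDesc_iff (hs := hGC.subcanonical) pi).1 hpiEpi
  have hνLF : LocallyFactors hGC.subcanonical ν := by
    intro U x
    obtain ⟨S₁, hS₁, H₁⟩ := hpiLF U (x ≫ pullback.snd f p)
    refine ⟨S₁, hS₁, ?_⟩
    intro V φ hφ
    obtain ⟨i, l, hl⟩ := H₁ φ hφ
    have hcond : ((yoMap J hGC.subcanonical φ ≫ x) ≫ pullback.fst f p) ≫ f =
        l ≫ (pi i ≫ p) := by
      simp only [Category.assoc]
      rw [pullback.condition, ← Category.assoc l, hl]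
      simp only [Category.assoc]
    refine ⟨i, pullback.lift ((yoMap J hGC.subcanonical φ ≫ x) ≫ pullback.fst f p)
      l hcond, ?_⟩
    apply pullback.hom_ext
    · rw [Category.assoc, hνfst i, pullback.lift_fst]
    · rw [Category.assoc, hνsnd i, ← Category.assoc, pullback.lift_snd, hl]
      simp only [Category.assoc]
  have hqLF : ∀ i, LocallyFactors hGC.subcanonical (q i) :=
    fun i => (epi_sigmaDesc_iff (hs := hGC.subcanonical) (q i)).1 (hqEpi i)
  refine ⟨Σ i, K i, fun ik => Vik ik.1 ik.2, fun ik => q ik.1 ik.2 ≫ ν ik.1, ?_, ?_⟩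
  · intro ik
    exact isOpenImmersion_comp P hGC.stableUnderComposition (hqOpen ik.1 ik.2) (hνOpen ik.1)
  · exact (epi_sigmaDesc_iff (hs := hGC.subcanonical) _).2 (locallyFactors_comp hνLF hqLF)
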